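/- arXiv:2403.08441 — 3 statements merged into one kernel-verified Lean document; each statement's English description precedes it below -/
import Mathlib

section
/- If S is a full n-qubit stabilizer group (having 2^n elements, equivalently n independent generators), then for any Hermitian n-qubit Pauli operator P commuting with every element of S, either P ∈ S or -P ∈ S. -/
open Matrix

/-- The space of linear operators on `n` qubits. -/
abbrev PauliOp (n : ℕ) := Matrix (Fin n → Fin 2) (Fin n → Fin 2) ℂ

/-- The four single-qubit Pauli matrices `I, X, Y, Z`. -/
def pauli1 : Fin 4 → Matrix (Fin 2) (Fin 2) ℂ
  | 0 => 1
  | 1 => !![0, 1; 1, 0]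
  | 2 => !![0, -Complex.I; Complex.I, 0]
  | 3 => !![1, 0; 0, -1]

/-- The tensor product of single-qubit Pauli matrices, as an operator on `n` qubits. -/
noncomputable def pauliTensor {n : ℕ} (p : Fin n → Fin 4) : PauliOp n :=
  fun x y => ∏ i, pauli1 (p i) (x i) (y i)

/-- A sign `±1`. -/
def sign (s : Bool) : ℂ := if s then -1 else 1

/-- A Hermitian `n`-qubit Pauli operator: `± p₁ ⊗ ⋯ ⊗ pₙ` with `pᵢ ∈ {I,X,Y,Z}`. -/
def IsPauli {n : ℕ} (P : PauliOp n) : Prop :=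
  ∃ (s : Bool) (p : Fin n → Fin 4), P = sign s • pauliTensor p

/-- The Hermitian Pauli operators acting nontrivially only on qubits whose index lies in `s`. -/
def SupportedWithin {n : ℕ} (s : Set ℕ) : Set (PauliOp n) :=
  {P | ∃ (sg : Bool) (p : Fin n → Fin 4),
    (∀ i : Fin n, (i : ℕ) ∉ s → p i = 0) ∧ P = sign sg • pauliTensor p}

/-- The Pauli operators whose last nontrivial qubit is (0-based) qubit `m`. -/
def Layer {n : ℕ} (m : ℕ) : Set (PauliOp n) :=
  SupportedWithin (Set.Iio (m + 1)) \ SupportedWithin (Set.Iio m)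

/-- A stabilizer group: a subgroup of the Hermitian `n`-qubit Pauli operators
not containing `-I`.  (Since Hermitian Paulis are involutions, closure under
multiplication plus containing `1` gives a group.) -/
structure IsStabGroup {n : ℕ} (S : Set (PauliOp n)) : Prop where
  pauli : ∀ P ∈ S, IsPauli P
  one_mem : (1 : PauliOp n) ∈ S
  mul_mem : ∀ P ∈ S, ∀ Q ∈ S, P * Q ∈ S
  neg_one_not_mem : (-1 : PauliOp n) ∉ S

/-- The stabilizer group of a state: all Hermitian Pauli operators fixing `ψ`. -/
def Stab {n : ℕ} (ψ : (Fin n → Fin 2) → ℂ) : Set (PauliOp n) :=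
  {P | IsPauli P ∧ P.mulVec ψ = ψ}

/-- The (multiplicative) group generated by a set of Pauli operators. -/
def genGroup {n : ℕ} (Q : Set (PauliOp n)) : Set (PauliOp n) :=
  (Submonoid.closure Q : Submonoid (PauliOp n))

/-- The signed closure `±Ps` of a set of Pauli operators. -/
def pmSet {n : ℕ} (Ps : Set (PauliOp n)) : Set (PauliOp n) :=
  {P | P ∈ Ps ∨ -P ∈ Ps}

/-- `𝒮(Ps)`: the restricted commuting subsets induced by `Ps`. -/
def restrictedSubsets {n : ℕ} (Ps : Set (PauliOp n)) : Set (Set (PauliOp n)) :=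
  {Q | Q ⊆ pmSet Ps ∧ Q = genGroup Q ∩ pmSet Ps ∧ (-1 : PauliOp n) ∉ genGroup Q}

open scoped Classical in
/-- `ε(P,T) = +1` if `P ∈ T`, `-1` if `-P ∈ T`, `0` otherwise. -/
noncomputable def eps {n : ℕ} (P : PauliOp n) (T : Set (PauliOp n)) : ℝ :=
  if P ∈ T then 1 else if -P ∈ T then -1 else 0

/-- The stabilizer-group energy `E_stab(H,T) = Σ_{P∈Ps} w_P ε(P,T)` of the
Pauli Hamiltonian `H = Σ_{P∈Ps} w_P P`. -/
noncomputable def Estab {n : ℕ} (Ps : Finset (PauliOp n)) (w : PauliOp n → ℝ)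
    (T : Set (PauliOp n)) : ℝ :=
  ∑ P ∈ Ps, w P * eps P T
namespace StabAux

abbrev V2 := ZMod 2 × ZMod 2

def enc : Fin 4 → V2 := ![(0,0),(1,0),(1,1),(0,1)]

def dec (v : V2) : Fin 4 :=
  if v = (0,0) then 0 else if v = (1,0) then 1 else if v = (1,1) then 2 else 3

def padd (a b : Fin 4) : Fin 4 := dec (enc a + enc b)

noncomputable def phase : Fin 4 → Fin 4 → ℂ
  | 0, 0 => 1
  | 0, 1 => 1
  | 0, 2 => 1
  | 0, 3 => 1
  | 1, 0 => 1
  | 2, 0 => 1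
  | 3, 0 => 1
  | 1, 1 => 1
  | 1, 2 => Complex.I
  | 1, 3 => -Complex.I
  | 2, 1 => -Complex.I
  | 2, 2 => 1
  | 2, 3 => Complex.I
  | 3, 1 => Complex.I
  | 3, 2 => -Complex.I
  | 3, 3 => 1

def om (a b : Fin 4) : ZMod 2 := (enc a).1 * (enc b).2 + (enc a).2 * (enc b).1

noncomputable def sgn (x : ZMod 2) : ℂ := if x = 0 then 1 else -1

lemma enc_dec (v : V2) : enc (dec v) = v := by revert v; decide

lemma enc_inj : Function.Injective enc := by decide

lemma enc_padd (a b : Fin 4) : enc (padd a b) = enc a + enc b := enc_dec _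

lemma padd_self (a : Fin 4) : padd a a = 0 := by revert a; decide

lemma padd_comm (a b : Fin 4) : padd a b = padd b a := by revert a b; decide

lemma phase_self (a : Fin 4) : phase a a = 1 := by
  fin_cases a <;> simp [phase]

lemma phase_ne_zero (a b : Fin 4) : phase a b ≠ 0 := by
  fin_cases a <;> fin_cases b <;> simp [phase, Complex.I_ne_zero]

lemma zmod2_cases (x : ZMod 2) : x = 0 ∨ x = 1 := by revert x; decide

lemma sgn_add (x y : ZMod 2) : sgn (x + y) = sgn x * sgn y := by
  rcases zmod2_cases x with rfl | rfl <;> rcases zmod2_cases y with rfl | rfl <;>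
    simp (config := { decide := true }) [sgn]

lemma sgn_zero : sgn 0 = 1 := by norm_num [sgn]

lemma om_comm (a b : Fin 4) : om a b = om b a := by unfold om; ring

lemma phase_comm (a b : Fin 4) : phase a b = sgn (om a b) * phase b a := by
  fin_cases a <;> fin_cases b <;>
    simp (config := { decide := true }) [phase, om, enc, sgn]

lemma pauli1_mul (a b : Fin 4) :
    pauli1 a * pauli1 b = phase a b • pauli1 (padd a b) := by
  fin_cases a <;> fin_cases b <;>
    · ext i j
      fin_cases i <;> fin_cases j <;>
        simp (config := { decide := true }) [pauli1, phase, padd, dec, enc,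
          Matrix.mul_apply, Fin.sum_univ_two, Matrix.one_apply]


open StabAux in
lemma pauliTensor_mul {n : ℕ} (p q : Fin n → Fin 4) :
    pauliTensor p * pauliTensor q =
      (∏ i, phase (p i) (q i)) • pauliTensor (fun i => padd (p i) (q i)) := by
  ext x y
  simp only [Matrix.mul_apply, pauliTensor, Matrix.smul_apply, smul_eq_mul]
  calc ∑ z : Fin n → Fin 2, (∏ i, pauli1 (p i) (x i) (z i)) * ∏ i, pauli1 (q i) (z i) (y i)
      = ∑ z : Fin n → Fin 2, ∏ i, (pauli1 (p i) (x i) (z i) * pauli1 (q i) (z i) (y i)) := by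
        simp_rw [Finset.prod_mul_distrib]
    _ = ∏ i, ∑ b : Fin 2, pauli1 (p i) (x i) b * pauli1 (q i) b (y i) :=
        (Fintype.prod_sum fun i b => pauli1 (p i) (x i) b * pauli1 (q i) b (y i)).symm
    _ = ∏ i, (pauli1 (p i) * pauli1 (q i)) (x i) (y i) := by
        simp [Matrix.mul_apply]
    _ = ∏ i, (phase (p i) (q i) * pauli1 (padd (p i) (q i)) (x i) (y i)) := by
        simp_rw [pauli1_mul, Matrix.smul_apply, smul_eq_mul]
    _ = (∏ i, phase (p i) (q i)) * ∏ i, pauli1 (padd (p i) (q i)) (x i) (y i) :=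
        Finset.prod_mul_distrib

lemma pauliTensor_zero {n : ℕ} : pauliTensor (fun _ : Fin n => (0 : Fin 4)) = 1 := by
  ext x y
  simp only [pauliTensor, Matrix.one_apply]
  show ∏ i, (1 : Matrix (Fin 2) (Fin 2) ℂ) (x i) (y i) = _
  by_cases h : x = y
  · subst h; simp [Matrix.one_apply]
  · rw [if_neg h]
    obtain ⟨i, hi⟩ := Function.ne_iff.mp h
    exact Finset.prod_eq_zero (Finset.mem_univ i) (by simp [Matrix.one_apply, hi])

open StabAux in
lemma pauliTensor_sq {n : ℕ} (p : Fin n → Fin 4) :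
    pauliTensor p * pauliTensor p = 1 := by
  rw [pauliTensor_mul]
  simp [phase_self, padd_self, pauliTensor_zero]

lemma pauliTensor_ne_zero {n : ℕ} (p : Fin n → Fin 4) : pauliTensor p ≠ 0 := by
  intro h
  have h1 := pauliTensor_sq p
  rw [h, zero_mul] at h1
  have := congrFun (congrFun h1 (fun _ => 0)) (fun _ => 0)
  simp [Matrix.one_apply] at this

open StabAux in
lemma trace_pauli1 (a : Fin 4) :
    ∑ b : Fin 2, pauli1 a b b = if a = 0 then 2 else 0 := by
  fin_cases a <;> simp [pauli1, Fin.sum_univ_two, Matrix.one_apply] <;> norm_num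

open StabAux in
lemma trace_pauliTensor {n : ℕ} (p : Fin n → Fin 4) :
    Matrix.trace (pauliTensor p) = if p = (fun _ => 0) then (2 ^ n : ℂ) else 0 := by
  have : Matrix.trace (pauliTensor p) = ∏ i, ∑ b : Fin 2, pauli1 (p i) b b := by
    rw [Matrix.trace]
    simp only [Matrix.diag, pauliTensor]
    exact (Fintype.prod_sum fun i b => pauli1 (p i) b b).symm
  rw [this]
  simp_rw [trace_pauli1]
  by_cases h : p = fun _ => 0
  · subst h; simp
  · rw [if_neg h]
    obtain ⟨i, hi⟩ := Function.ne_iff.mp h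
    exact Finset.prod_eq_zero (Finset.mem_univ i) (if_neg hi)

open StabAux in
/-- Uniqueness of scalar·tensor representations. -/
lemma rep_unique {n : ℕ} {c d : ℂ} {p q : Fin n → Fin 4} (hc : c ≠ 0) (hd : d ≠ 0)
    (h : c • pauliTensor p = d • pauliTensor q) : p = q ∧ c = d := by
  have key : p = q := by
    by_contra hpq
    have h2 : c • (pauliTensor p * pauliTensor q) = d • (1 : PauliOp n) := by
      calc c • (pauliTensor p * pauliTensor q) = (c • pauliTensor p) * pauliTensor q := by
            rw [Matrix.smul_mul]
        _ = (d • pauliTensor q) * pauliTensor q := by rw [h]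
        _ = d • (1 : PauliOp n) := by rw [Matrix.smul_mul, pauliTensor_sq]
    rw [pauliTensor_mul] at h2
    have h3 := congrArg Matrix.trace h2
    rw [Matrix.trace_smul, Matrix.trace_smul, Matrix.trace_smul, trace_pauliTensor,
      Matrix.trace_one] at h3
    have hne : (fun i => padd (p i) (q i)) ≠ (fun _ => 0) := by
      intro hz
      apply hpq
      funext i
      have := congrFun hz i
      have h4 : enc (p i) + enc (q i) = 0 := by
        rw [← enc_padd, this]; rfl
      have : enc (p i) = enc (q i) := by
        have := congrArg (· + enc (q i)) h4
        have h5 : ∀ x : V2, x + x = 0 := by decide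
        simpa [add_assoc, h5] using this
      exact enc_inj this
    rw [if_neg hne, smul_zero, smul_zero, smul_eq_mul] at h3
    have hcard : ((Fintype.card (Fin n → Fin 2) : ℕ) : ℂ) ≠ 0 :=
      Nat.cast_ne_zero.mpr Fintype.card_ne_zero
    rcases mul_eq_zero.mp h3.symm with h' | h'
    · exact hd h'
    · exact absurd h' hcard
  subst key
  refine ⟨rfl, ?_⟩
  have := sub_eq_zero.mpr h
  rw [← sub_smul] at this
  rcases smul_eq_zero.mp this with h' | h'
  · exact sub_eq_zero.mp h'
  · exact absurd h' (pauliTensor_ne_zero p)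



lemma sign_ne_zero (s : Bool) : sign s ≠ 0 := by cases s <;> norm_num [sign]

lemma sign_mul_self (s : Bool) : sign s * sign s = 1 := by cases s <;> norm_num [sign]

lemma sgn_sum {ι : Type*} (s : Finset ι) (f : ι → ZMod 2) :
    sgn (∑ i ∈ s, f i) = ∏ i ∈ s, sgn (f i) := by
  induction s using Finset.cons_induction with
  | empty => simp [sgn_zero]
  | cons a s ha ih => rw [Finset.sum_cons, Finset.prod_cons, sgn_add, ih]

lemma comm_sgn {n : ℕ} (p q : Fin n → Fin 4) :
    pauliTensor p * pauliTensor q =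
      sgn (∑ i, om (p i) (q i)) • (pauliTensor q * pauliTensor p) := by
  rw [pauliTensor_mul, pauliTensor_mul, smul_smul]
  have hpadd : (fun i => padd (q i) (p i)) = fun i => padd (p i) (q i) := by
    funext i; exact padd_comm _ _
  rw [hpadd]
  congr 1
  rw [sgn_sum]
  calc ∏ i, phase (p i) (q i)
      = ∏ i, (sgn (om (p i) (q i)) * phase (q i) (p i)) := by
        exact Finset.prod_congr rfl fun i _ => phase_comm _ _
    _ = (∏ i, sgn (om (p i) (q i))) * ∏ i, phase (q i) (p i) := Finset.prod_mul_distrib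

lemma tensor_mul_ne_zero {n : ℕ} (p q : Fin n → Fin 4) :
    pauliTensor p * pauliTensor q ≠ 0 := by
  rw [pauliTensor_mul]
  exact smul_ne_zero (Finset.prod_ne_zero_iff.mpr fun i _ => phase_ne_zero _ _)
    (pauliTensor_ne_zero _)

lemma comm_imp_om {n : ℕ} {p q : Fin n → Fin 4}
    (h : pauliTensor p * pauliTensor q = pauliTensor q * pauliTensor p) :
    ∑ i, om (p i) (q i) = 0 := by
  by_contra hσ
  have hs : sgn (∑ i, om (p i) (q i)) = -1 := by rw [sgn, if_neg hσ]
  have h2 := comm_sgn p q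
  rw [hs, ← h, neg_smul, one_smul] at h2
  have : (2 : ℂ) • (pauliTensor p * pauliTensor q) = 0 := by
    rw [two_smul]
    nth_rewrite 1 [h2]
    simp
  rcases smul_eq_zero.mp this with h' | h'
  · norm_num at h'
  · exact tensor_mul_ne_zero p q h'

lemma anticomm_sq {n : ℕ} {p q : Fin n → Fin 4} (h : ∑ i, om (p i) (q i) ≠ 0) :
    (pauliTensor p * pauliTensor q) * (pauliTensor p * pauliTensor q) = -1 := by
  have hs : sgn (∑ i, om (q i) (p i)) = -1 := by
    rw [sgn, if_neg]
    intro h0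
    exact h (by rw [show (∑ i, om (p i) (q i)) = ∑ i, om (q i) (p i) from
      Finset.sum_congr rfl fun i _ => om_comm _ _, h0])
  have h2 := comm_sgn q p
  rw [hs, neg_smul, one_smul] at h2
  calc (pauliTensor p * pauliTensor q) * (pauliTensor p * pauliTensor q)
      = pauliTensor p * (pauliTensor q * pauliTensor p) * pauliTensor q := by
        rw [mul_assoc, mul_assoc, mul_assoc]
    _ = pauliTensor p * -(pauliTensor p * pauliTensor q) * pauliTensor q := by rw [h2]
    _ = -((pauliTensor p * pauliTensor p) * (pauliTensor q * pauliTensor q)) := by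
        rw [mul_neg, neg_mul]; rw [mul_assoc, mul_assoc, mul_assoc]
    _ = -1 := by rw [pauliTensor_sq, pauliTensor_sq, one_mul]

/-! ### The symplectic space over `ZMod 2` -/

abbrev Vn (n : ℕ) := Fin n → V2

noncomputable def Bform (n : ℕ) : LinearMap.BilinForm (ZMod 2) (Vn n) :=
  LinearMap.mk₂ (ZMod 2)
    (fun v w => ∑ i, ((v i).1 * (w i).2 + (v i).2 * (w i).1))
    (fun v v' w => by
      rw [← Finset.sum_add_distrib]
      exact Finset.sum_congr rfl fun i _ => by simp [Prod.fst_add, Prod.snd_add]; ring)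
    (fun c v w => by
      rw [Finset.smul_sum]
      exact Finset.sum_congr rfl fun i _ => by
        simp [Prod.smul_fst, Prod.smul_snd, smul_eq_mul]; ring)
    (fun v w w' => by
      rw [← Finset.sum_add_distrib]
      exact Finset.sum_congr rfl fun i _ => by simp [Prod.fst_add, Prod.snd_add]; ring)
    (fun c v w => by
      rw [Finset.smul_sum]
      exact Finset.sum_congr rfl fun i _ => by
        simp [Prod.smul_fst, Prod.smul_snd, smul_eq_mul]; ring)

lemma Bform_apply {n : ℕ} (v w : Vn n) :
    Bform n v w = ∑ i, ((v i).1 * (w i).2 + (v i).2 * (w i).1) := rfl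

lemma Bform_comm {n : ℕ} (v w : Vn n) : Bform n v w = Bform n w v := by
  rw [Bform_apply, Bform_apply]
  exact Finset.sum_congr rfl fun i _ => by ring

lemma Bform_refl {n : ℕ} : (Bform n).IsRefl := fun v w h => by rw [Bform_comm]; exact h

lemma Bform_single {n : ℕ} (v : Vn n) (i : Fin n) (x : V2) :
    Bform n v (Pi.single i x) = (v i).1 * x.2 + (v i).2 * x.1 := by
  rw [Bform_apply]
  rw [Finset.sum_eq_single i]
  · rw [Pi.single_eq_same]
  · intro j _ hj
    rw [Pi.single_eq_of_ne hj]
    simp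
  · intro h; exact absurd (Finset.mem_univ i) h

lemma Bform_nondeg {n : ℕ} : (Bform n).Nondegenerate := by
  have hl : ∀ v : Vn n, (∀ w, Bform n v w = 0) → v = 0 := by
    intro v hv
    funext i
    have h1 := hv (Pi.single i ((0 : ZMod 2), (1 : ZMod 2)))
    have h2 := hv (Pi.single i ((1 : ZMod 2), (0 : ZMod 2)))
    rw [Bform_single] at h1 h2
    simp only [mul_one, mul_zero, add_zero, zero_add] at h1 h2
    show v i = (0, 0)
    exact Prod.ext h1 h2
  exact ⟨hl, fun v hv => hl v fun w => by rw [Bform_comm]; exact hv w⟩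

lemma finrank_Vn (n : ℕ) : Module.finrank (ZMod 2) (Vn n) = 2 * n := by
  rw [Module.finrank_pi_fintype]
  simp [Module.finrank_prod, Module.finrank_self, two_mul, mul_comm]



variable {n : ℕ}

open Module

/-- The set of labels of a stabilizer set. -/
def labels (S : Set (PauliOp n)) : Set (Vn n) :=
  {v | ∃ (s : Bool) (p : Fin n → Fin 4), v = (fun i => enc (p i)) ∧ sign s • pauliTensor p ∈ S}

lemma neg_self_Vn (v : Vn n) : -v = v := by
  funext i
  have h : ∀ x : V2, -x = x := by decide
  exact h (v i)

lemma smul_pauli_mul (s t : Bool) (p q : Fin n → Fin 4) :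
    (sign s • pauliTensor p) * (sign t • pauliTensor q) =
      (sign s * sign t * ∏ i, phase (p i) (q i)) •
        pauliTensor (fun i => padd (p i) (q i)) := by
  rw [Matrix.smul_mul, Matrix.mul_smul, pauliTensor_mul, smul_smul, smul_smul]

/-- The labels of a stabilizer group form a `ZMod 2`-submodule. -/
noncomputable def labelSub (S : Set (PauliOp n)) (hS : IsStabGroup S) :
    Submodule (ZMod 2) (Vn n) :=
  AddSubgroup.toZModSubmodule 2
    { carrier := labels S
      zero_mem' := by
        refine ⟨false, fun _ => 0, ?_, ?_⟩
        · funext i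
          show (0 : V2) = enc 0
          decide
        · rw [show sign false = 1 from rfl, one_smul, pauliTensor_zero]
          exact hS.one_mem
      add_mem' := by
        rintro v w ⟨s, p, rfl, hp⟩ ⟨t, q, rfl, hq⟩
        have hmul := hS.mul_mem _ hp _ hq
        rw [smul_pauli_mul] at hmul
        obtain ⟨u, m, hm⟩ := hS.pauli _ hmul
        have hc : sign s * sign t * ∏ i, phase (p i) (q i) ≠ 0 :=
          mul_ne_zero (mul_ne_zero (sign_ne_zero s) (sign_ne_zero t))
            (Finset.prod_ne_zero_iff.mpr fun i _ => phase_ne_zero _ _)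
        obtain ⟨hrm, -⟩ := rep_unique hc (sign_ne_zero u) hm
        refine ⟨u, fun i => padd (p i) (q i), ?_, ?_⟩
        · funext i
          show enc (p i) + enc (q i) = enc (padd (p i) (q i))
          rw [enc_padd]
        · rw [← hrm] at hm
          rw [← hm]
          exact hmul
      neg_mem' := by
        intro v hv
        rw [neg_self_Vn]
        exact hv }

lemma mem_labelSub {S : Set (PauliOp n)} {hS : IsStabGroup S} {v : Vn n} :
    v ∈ labelSub S hS ↔ v ∈ labels S := Iff.rfl

/-- Elements of the stabilizer group pairwise "symplectically commute". -/
lemma labels_isotropic {S : Set (PauliOp n)} (hS : IsStabGroup S)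
    {s t : Bool} {p q : Fin n → Fin 4}
    (hp : sign s • pauliTensor p ∈ S) (hq : sign t • pauliTensor q ∈ S) :
    ∑ i, om (p i) (q i) = 0 := by
  by_contra hσ
  have hsq : (pauliTensor p * pauliTensor q) * (pauliTensor p * pauliTensor q) = -1 :=
    anticomm_sq hσ
  have hmul := hS.mul_mem _ hp _ hq
  have hsq2 : ((sign s • pauliTensor p) * (sign t • pauliTensor q)) *
      ((sign s • pauliTensor p) * (sign t • pauliTensor q)) = -1 := by
    have h1 : (sign s • pauliTensor p) * (sign t • pauliTensor q) =
        (sign s * sign t) • (pauliTensor p * pauliTensor q) := by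
      rw [Matrix.smul_mul, Matrix.mul_smul, smul_smul]
    rw [h1, Matrix.smul_mul, Matrix.mul_smul, smul_smul, hsq]
    rw [mul_mul_mul_comm, sign_mul_self, sign_mul_self, one_mul, one_smul]
  have := hS.mul_mem _ hmul _ hmul
  rw [hsq2] at this
  exact hS.neg_one_not_mem this

/-- The bilinear form on labels computes the commutation phase. -/
lemma Bform_labels (p q : Fin n → Fin 4) :
    Bform n (fun i => enc (p i)) (fun i => enc (q i)) = ∑ i, om (p i) (q i) := by
  rw [Bform_apply]
  rfl

lemma card_labelSub {S : Set (PauliOp n)} (hS : IsStabGroup S)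
    (hfull : S.ncard = 2 ^ n) : Nat.card (labelSub S hS) = 2 ^ n := by
  classical
  have hlab : ∀ Q ∈ S, IsPauli Q := hS.pauli
  choose sg pf hpf using hlab
  let f : S → labelSub S hS := fun Q =>
    ⟨fun i => enc (pf Q.1 Q.2 i), ⟨sg Q.1 Q.2, pf Q.1 Q.2, rfl, by
      rw [← hpf Q.1 Q.2]; exact Q.2⟩⟩
  have hinj : Function.Injective f := by
    rintro ⟨Q, hQ⟩ ⟨Q', hQ'⟩ h
    have hpp : pf Q hQ = pf Q' hQ' := by
      funext i
      exact enc_inj (congrFun (Subtype.ext_iff.mp h) i)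
    by_cases hss : sg Q hQ = sg Q' hQ'
    · apply Subtype.ext
      show Q = Q'
      rw [hpf Q hQ, hpf Q' hQ', hpp, hss]
    · exfalso
      have hmul := hS.mul_mem _ hQ _ hQ'
      have hQQ : Q * Q' = -1 := by
        rw [hpf Q hQ, hpf Q' hQ', hpp, smul_pauli_mul]
        have h1 : (fun i => padd (pf Q' hQ' i) (pf Q' hQ' i)) = fun _ : Fin n => (0 : Fin 4) := by
          funext i; exact padd_self _
        have h2 : (∏ i, phase (pf Q' hQ' i) (pf Q' hQ' i)) = 1 :=
          Finset.prod_eq_one fun i _ => phase_self _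
        have hmo : sign (sg Q hQ) * sign (sg Q' hQ') = -1 := by
          rcases Bool.eq_false_or_eq_true (sg Q hQ) with h3 | h3 <;>
            rcases Bool.eq_false_or_eq_true (sg Q' hQ') with h4 | h4 <;>
              rw [h3, h4] at hss ⊢ <;>
                first
                  | exact absurd rfl hss
                  | norm_num [sign]
        rw [h2, mul_one, h1, pauliTensor_zero, hmo, neg_smul, one_smul]
      rw [hQQ] at hmul
      exact hS.neg_one_not_mem hmul
  have hsurj : Function.Surjective f := by
    rintro ⟨v, hv⟩
    obtain ⟨s, p, rfl, hp⟩ := hv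
    refine ⟨⟨sign s • pauliTensor p, hp⟩, ?_⟩
    apply Subtype.ext
    obtain ⟨hq, -⟩ := rep_unique (sign_ne_zero (sg _ hp)) (sign_ne_zero s)
      (hpf (sign s • pauliTensor p) hp).symm
    show (fun i => enc (pf _ hp i)) = fun i => enc (p i)
    rw [hq]
  rw [← Nat.card_eq_of_bijective f ⟨hinj, hsurj⟩, Nat.card_coe_set_eq, hfull]

lemma finrank_labelSub {S : Set (PauliOp n)} (hS : IsStabGroup S)
    (hfull : S.ncard = 2 ^ n) :
    Module.finrank (ZMod 2) (labelSub S hS) = n := by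
  letI hfin : Fintype (labelSub S hS) := Fintype.ofFinite _
  have hcard := card_labelSub hS hfull
  rw [Nat.card_eq_fintype_card] at hcard
  rw [card_eq_pow_finrank (K := ZMod 2) (V := labelSub S hS), ZMod.card] at hcard
  exact Nat.pow_right_injective (le_refl 2) hcard


end StabAux

open StabAux

/-- If `S` is a full `n`-qubit stabilizer group (with `2^n` elements),
then any Hermitian Pauli operator commuting with every element of `S` satisfies
`P ∈ S` or `-P ∈ S`. -/
theorem full_stabGroup_centralizer {n : ℕ} (S : Set (PauliOp n))
    (hS : IsStabGroup S) (hfull : S.ncard = 2 ^ n)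
    (P : PauliOp n) (hP : IsPauli P)
    (hcomm : ∀ Q ∈ S, P * Q = Q * P) :
    P ∈ S ∨ -P ∈ S := by
  classical
  obtain ⟨s, p, rfl⟩ := hP
  set L := labelSub S hS with hL
  have hiso : L ≤ (Bform n).orthogonal L := by
    intro v hv
    rw [LinearMap.BilinForm.mem_orthogonal_iff]
    rintro w ⟨t, q, rfl, hq⟩
    obtain ⟨s', p', rfl, hp'⟩ := hv
    show Bform n _ _ = 0
    rw [Bform_labels]
    exact labels_isotropic hS hq hp'
  have horth : (Bform n).orthogonal L = L := by
    symm
    apply Submodule.eq_of_le_of_finrank_le hiso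
    rw [LinearMap.BilinForm.finrank_orthogonal Bform_nondeg,
      finrank_Vn, finrank_labelSub hS hfull]
    omega
  have hmem : (fun i => enc (p i)) ∈ (Bform n).orthogonal L := by
    rw [LinearMap.BilinForm.mem_orthogonal_iff]
    rintro w ⟨t, q, rfl, hq⟩
    show Bform n _ _ = 0
    rw [Bform_labels]
    have hc := hcomm _ hq
    rw [Matrix.smul_mul, Matrix.mul_smul, Matrix.smul_mul, Matrix.mul_smul,
      smul_smul, smul_smul, mul_comm (sign s) (sign t)] at hc
    have hTT : pauliTensor p * pauliTensor q = pauliTensor q * pauliTensor p :=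
      smul_right_injective _ (mul_ne_zero (sign_ne_zero t) (sign_ne_zero s)) hc
    have h0 : ∑ i, om (p i) (q i) = 0 := comm_imp_om hTT
    rw [← h0]
    exact Finset.sum_congr rfl fun i _ => om_comm _ _
  rw [horth] at hmem
  obtain ⟨t, q, hv, hq⟩ := hmem
  have hqp : q = p := by
    funext i
    exact enc_inj (congrFun hv i).symm
  rw [hqp] at hq
  by_cases hst : s = t
  · left
    rw [hst]
    exact hq
  · right
    have hneg : -(sign s • pauliTensor p) = sign t • pauliTensor p := by
      rw [← neg_smul]
      congr 1
      rcases Bool.eq_false_or_eq_true s with h | h <;>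
        rcases Bool.eq_false_or_eq_true t with h' | h' <;> simp_all [sign]
    rw [hneg]
    exact hq
end

section
/- The mapping |ψ⟩ ↦ Stab(|ψ⟩) from n-qubit stabilizer states to full n-qubit stabilizer groups is a bijection: every full stabilizer group stabilizes a unique state (up to global phase), and distinct stabilizer states have distinct full stabilizer groups. -/
open Matrix

section StabAux

noncomputable def genTensor {n : ℕ} (M : Fin n → Matrix (Fin 2) (Fin 2) ℂ) : PauliOp n :=
  fun x y => ∏ i, M i (x i) (y i)

lemma pauliTensor_eq_genTensor {n : ℕ} (p : Fin n → Fin 4) :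
    pauliTensor p = genTensor (fun i => pauli1 (p i)) := rfl

lemma genTensor_mul {n : ℕ} (M N : Fin n → Matrix (Fin 2) (Fin 2) ℂ) :
    genTensor M * genTensor N = genTensor (fun i => M i * N i) := by
  funext x y
  show (genTensor M * genTensor N) x y = _
  rw [Matrix.mul_apply]
  have : ∀ z : Fin n → Fin 2, genTensor M x z * genTensor N z y
      = ∏ i, (M i (x i) (z i) * N i (z i) (y i)) := by
    intro z; rw [genTensor, genTensor, ← Finset.prod_mul_distrib]
  simp_rw [this]
  rw [genTensor]
  simp_rw [Matrix.mul_apply]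
  rw [Finset.prod_univ_sum]
  rw [← Fintype.piFinset_univ]

lemma genTensor_one {n : ℕ} : genTensor (fun _ : Fin n => (1 : Matrix (Fin 2) (Fin 2) ℂ)) = 1 := by
  funext x y
  show (∏ i, (1 : Matrix (Fin 2) (Fin 2) ℂ) (x i) (y i)) = (1 : PauliOp n) x y
  simp only [Matrix.one_apply]
  rw [Finset.prod_boole]
  simp [funext_iff]

lemma genTensor_smul {n : ℕ} (c : Fin n → ℂ) (M : Fin n → Matrix (Fin 2) (Fin 2) ℂ) :
    genTensor (fun i => c i • M i) = (∏ i, c i) • genTensor M := by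
  funext x y
  show (∏ i, (c i • M i) (x i) (y i)) = ((∏ i, c i) • genTensor M) x y
  simp only [Matrix.smul_apply, smul_eq_mul, genTensor]
  rw [Finset.prod_mul_distrib]

lemma trace_genTensor {n : ℕ} (M : Fin n → Matrix (Fin 2) (Fin 2) ℂ) :
    (genTensor M).trace = ∏ i, (M i).trace := by
  rw [Matrix.trace]
  simp only [Matrix.diag, Matrix.trace, genTensor]
  rw [Finset.prod_univ_sum, ← Fintype.piFinset_univ]

def phC : Fin 4 → Fin 4 → ℂ :=
  ![![1, 1, 1, 1],
    ![1, 1, Complex.I, -Complex.I],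
    ![1, -Complex.I, 1, Complex.I],
    ![1, Complex.I, -Complex.I, 1]]

def mIdx : Fin 4 → Fin 4 → Fin 4 :=
  ![![0, 1, 2, 3],
    ![1, 0, 3, 2],
    ![2, 3, 0, 1],
    ![3, 2, 1, 0]]

lemma mIdx_eq_zero_iff : ∀ a b : Fin 4, (mIdx a b = 0 ↔ a = b) := by decide

lemma phC_self (a : Fin 4) : phC a a = 1 := by
  fin_cases a <;> simp [phC, Matrix.vecHead, Matrix.vecTail]

lemma pauli1_mul (a b : Fin 4) : pauli1 a * pauli1 b = phC a b • pauli1 (mIdx a b) := by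
  fin_cases a <;> fin_cases b <;>
    · ext i j
      fin_cases i <;> fin_cases j <;>
        simp [pauli1, phC, mIdx, Matrix.mul_apply, Fin.sum_univ_two, Matrix.one_apply,
          Matrix.vecHead, Matrix.vecTail] <;>
        ring_nf <;> simp [Complex.I_sq] <;> ring

lemma trace_pauli1 (k : Fin 4) : (pauli1 k).trace = if k = 0 then 2 else 0 := by
  fin_cases k <;> simp [pauli1, Matrix.trace, Fin.sum_univ_two, Matrix.one_apply]



lemma pauliTensor_zero {n : ℕ} : pauliTensor (0 : Fin n → Fin 4) = 1 := by
  rw [pauliTensor_eq_genTensor]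
  have : (fun i : Fin n => pauli1 ((0 : Fin n → Fin 4) i)) = fun _ => (1 : Matrix (Fin 2) (Fin 2) ℂ) := by
    funext i; rfl
  rw [this, genTensor_one]

lemma pauliTensor_mul {n : ℕ} (p q : Fin n → Fin 4) :
    pauliTensor p * pauliTensor q
      = (∏ i, phC (p i) (q i)) • pauliTensor (fun i => mIdx (p i) (q i)) := by
  rw [pauliTensor_eq_genTensor, pauliTensor_eq_genTensor, genTensor_mul]
  simp_rw [pauli1_mul]
  rw [genTensor_smul]
  rfl

lemma pauliTensor_sq {n : ℕ} (p : Fin n → Fin 4) : pauliTensor p * pauliTensor p = 1 := by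
  rw [pauliTensor_mul]
  simp only [phC_self, mIdx_eq_zero_iff]
  have h1 : (fun i : Fin n => mIdx (p i) (p i)) = (0 : Fin n → Fin 4) := by
    funext i; exact (mIdx_eq_zero_iff _ _).2 rfl
  rw [h1, pauliTensor_zero]
  simp

lemma signC_mul_self (s : Bool) : sign s * sign s = 1 := by cases s <;> norm_num [sign]

lemma signC_ne_zero (s : Bool) : sign s ≠ 0 := by cases s <;> norm_num [sign]

lemma pauli_sq {n : ℕ} {P : PauliOp n} (h : IsPauli P) : P * P = 1 := by
  obtain ⟨s, p, rfl⟩ := h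
  rw [smul_mul_smul_comm, signC_mul_self, pauliTensor_sq, one_smul]

lemma trace_pauliTensor_ne {n : ℕ} {p : Fin n → Fin 4} (hp : p ≠ 0) :
    (pauliTensor p).trace = 0 := by
  rw [pauliTensor_eq_genTensor, trace_genTensor]
  obtain ⟨i, hi⟩ := Function.ne_iff.1 hp
  refine Finset.prod_eq_zero (Finset.mem_univ i) ?_
  rw [trace_pauli1, if_neg (by simpa using hi)]

lemma trace_one_pauliOp (n : ℕ) : (1 : PauliOp n).trace = (2 : ℂ) ^ n := by
  rw [Matrix.trace_one]
  simp [Fintype.card_fun]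

lemma trace_pauli_of_ne_one {n : ℕ} {P : PauliOp n} (h : IsPauli P)
    (h1 : P ≠ 1) (h2 : P ≠ -1) : P.trace = 0 := by
  obtain ⟨s, p, rfl⟩ := h
  by_cases hp : p = 0
  · subst hp
    rw [pauliTensor_zero] at h1 h2
    cases s
    · simp [sign] at h1
    · simp [sign] at h2
  · rw [Matrix.trace_smul, trace_pauliTensor_ne hp, smul_zero]

open Module in
lemma exists_rank_one {m : Type*} [Fintype m] [DecidableEq m]
    (A : Matrix m m ℂ) (h2 : A * A = A) (ht : A.trace = 1) :
    ∃ ψ : m → ℂ, ψ ≠ 0 ∧ A.mulVec ψ = ψ ∧ ∀ v, ∃ c : ℂ, A.mulVec v = c • ψ := by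
  set f := Matrix.toLin' A with hf
  have hidem : ∀ x, f (f x) = f x := by
    intro x
    have : f ∘ₗ f = f := by rw [hf, ← Matrix.toLin'_mul, h2]
    exact congrFun (congrArg (fun g => g.toFun) this) x
  have hproj : LinearMap.IsProj (LinearMap.range f) f := by
    constructor
    · intro x; exact ⟨x, rfl⟩
    · rintro x ⟨y, rfl⟩; exact hidem y
  have htr : LinearMap.trace ℂ (m → ℂ) f = (finrank ℂ (LinearMap.range f) : ℂ) := hproj.trace
  have htrA : LinearMap.trace ℂ (m → ℂ) f = A.trace := by
    rw [LinearMap.trace_eq_matrix_trace ℂ (Pi.basisFun ℂ m) f]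
    congr 1
    rw [LinearMap.toMatrix_eq_toMatrix']
    exact LinearMap.toMatrix'_toLin' A
  have hrk : finrank ℂ (LinearMap.range f) = 1 := by
    have : (finrank ℂ (LinearMap.range f) : ℂ) = 1 := by rw [← htr, htrA, ht]
    exact_mod_cast this
  obtain ⟨v, hv0, hv⟩ := finrank_eq_one_iff'.1 hrk
  refine ⟨(v : m → ℂ), by simpa using hv0, ?_, ?_⟩
  · have := hproj.map_id (v : m → ℂ) v.2
    rw [← Matrix.toLin'_apply]
    exact this
  · intro w
    obtain ⟨c, hc⟩ := hv ⟨f w, ⟨w, rfl⟩⟩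
    refine ⟨c, ?_⟩
    have : c • (v : m → ℂ) = f w := congrArg Subtype.val hc
    rw [← Matrix.toLin'_apply]
    exact this.symm

lemma sum_mulVec' {n : ℕ} (Fs : Finset (PauliOp n)) (ψ : (Fin n → Fin 2) → ℂ) :
    (∑ P ∈ Fs, P) *ᵥ ψ = ∑ P ∈ Fs, P *ᵥ ψ := by
  have h : ∀ A : PauliOp n, A *ᵥ ψ = Matrix.toLin' A ψ := fun A => (Matrix.toLin'_apply A ψ).symm
  rw [h, map_sum]
  rw [LinearMap.sum_apply]
  simp_rw [h]

lemma proj_spec {n : ℕ} (S : Set (PauliOp n)) (hS : IsStabGroup S) (hcard : S.ncard = 2 ^ n) :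
    ∃ Pi : PauliOp n, Pi * Pi = Pi ∧ Pi.trace = 1 ∧ (∀ P ∈ S, P * Pi = Pi) ∧
      (∀ ψ, (∀ P ∈ S, P.mulVec ψ = ψ) → Pi.mulVec ψ = ψ) ∧
      (∀ (sq : Bool) (q : Fin n → Fin 4), (∀ t, sign t • pauliTensor q ∉ S) →
        ((sign sq • pauliTensor q) * Pi).trace = 0) := by
  have hfin : S.Finite := by
    by_contra h
    rw [Set.Infinite.ncard (h)] at hcard
    exact (pow_ne_zero n two_ne_zero) hcard.symm
  set Fs : Finset (PauliOp n) := hfin.toFinset with hFs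
  have hmem : ∀ P, P ∈ Fs ↔ P ∈ S := fun P => hfin.mem_toFinset
  have hcardF : Fs.card = 2 ^ n := by
    rw [← hcard, Set.ncard_eq_toFinset_card S hfin]
  set c : ℂ := ((2 : ℂ) ^ n)⁻¹ with hc
  have hc0 : ((2 : ℂ) ^ n) ≠ 0 := pow_ne_zero n two_ne_zero
  set Pi : PauliOp n := c • ∑ P ∈ Fs, P with hPi
  -- left multiplication invariance
  have hinv : ∀ P ∈ S, P * (∑ Q ∈ Fs, Q) = ∑ Q ∈ Fs, Q := by
    intro P hP
    rw [Finset.mul_sum]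
    refine Finset.sum_nbij' (fun Q => P * Q) (fun Q => P * Q) ?_ ?_ ?_ ?_ ?_
    · intro Q hQ; rw [hmem] at *; exact hS.mul_mem P hP Q hQ
    · intro Q hQ; rw [hmem] at *; exact hS.mul_mem P hP Q hQ
    · intro Q _; show P * (P * Q) = Q
      rw [← mul_assoc, pauli_sq (hS.pauli P hP), one_mul]
    · intro Q _; show P * (P * Q) = Q
      rw [← mul_assoc, pauli_sq (hS.pauli P hP), one_mul]
    · intro Q _; rfl
  have hmul : ∀ P ∈ S, P * Pi = Pi := by
    intro P hP
    rw [hPi, mul_smul_comm, hinv P hP]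
  -- idempotence
  have hsq : Pi * Pi = Pi := by
    have hss : (∑ P ∈ Fs, P) * (∑ Q ∈ Fs, Q) = (2 ^ n : ℂ) • ∑ Q ∈ Fs, Q := by
      rw [Finset.sum_mul]
      have : ∀ P ∈ Fs, P * (∑ Q ∈ Fs, Q) = ∑ Q ∈ Fs, Q := fun P hP => hinv P ((hmem P).1 hP)
      rw [Finset.sum_congr rfl this, Finset.sum_const, hcardF]
      rw [← Nat.cast_smul_eq_nsmul ℂ]
      norm_num
    rw [hPi, smul_mul_assoc, mul_smul_comm, hss]
    rw [smul_smul, smul_smul, hc]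
    congr 1
    field_simp
  -- trace
  have htr : Pi.trace = 1 := by
    have hsum : (∑ P ∈ Fs, P).trace = (2 : ℂ) ^ n := by
      rw [Matrix.trace_sum]
      rw [Finset.sum_eq_single_of_mem 1 ((hmem 1).2 hS.one_mem)]
      · exact trace_one_pauliOp n
      · intro P hP hne
        refine trace_pauli_of_ne_one (hS.pauli P ((hmem P).1 hP)) hne ?_
        intro h; rw [h] at hP; exact hS.neg_one_not_mem ((hmem _).1 hP)
    rw [hPi, Matrix.trace_smul, hsum, hc, smul_eq_mul, inv_mul_cancel₀ hc0]
  -- fixes stabilized vectors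
  have hfix : ∀ ψ, (∀ P ∈ S, P.mulVec ψ = ψ) → Pi.mulVec ψ = ψ := by
    intro ψ hψ
    rw [hPi, Matrix.smul_mulVec, sum_mulVec']
    have : ∀ P ∈ Fs, P *ᵥ ψ = ψ := fun P hP => hψ P ((hmem P).1 hP)
    rw [Finset.sum_congr rfl this, Finset.sum_const, hcardF, ← Nat.cast_smul_eq_nsmul ℂ, smul_smul,
      hc]
    norm_num
  -- orthogonality
  refine ⟨Pi, hsq, htr, hmul, hfix, ?_⟩
  intro sq q hq
  rw [hPi, mul_smul_comm, Finset.mul_sum, Matrix.trace_smul]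
  have hz : ∀ P ∈ Fs, ((sign sq • pauliTensor q) * P).trace = 0 := by
    intro P hP
    obtain ⟨t, p, hrep⟩ := hS.pauli P ((hmem P).1 hP)
    have hpq : q ≠ p := by
      rintro rfl
      exact hq t (hrep ▸ (hmem P).1 hP)
    rw [hrep, smul_mul_smul_comm, pauliTensor_mul, smul_smul, Matrix.trace_smul]
    have : (fun i => mIdx (q i) (p i)) ≠ (0 : Fin n → Fin 4) := by
      obtain ⟨i, hi⟩ := Function.ne_iff.1 hpq
      intro h
      exact hi ((mIdx_eq_zero_iff _ _).1 (congrFun h i))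
    rw [trace_pauliTensor_ne this, smul_zero]
  rw [Matrix.trace_sum, Finset.sum_congr rfl hz, Finset.sum_const, smul_zero, smul_zero]

lemma smul_eq_self_of_ne {n : ℕ} {d : ℂ} {ψ : (Fin n → Fin 2) → ℂ}
    (h : d • ψ = ψ) (hψ : ψ ≠ 0) : d = 1 := by
  obtain ⟨j, hj⟩ := Function.ne_iff.1 hψ
  have hj' : ψ j ≠ 0 := by simpa using hj
  have h1 : d * ψ j = ψ j := by
    have := congrFun h j
    simpa using this
  have h2 : (d - 1) * ψ j = 0 := by ring_nf; linear_combination h1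
  rcases mul_eq_zero.1 h2 with h3 | h3
  · exact sub_eq_zero.1 h3
  · exact absurd h3 hj'

lemma smul_one_mulVec {n : ℕ} (d : ℂ) (ψ : (Fin n → Fin 2) → ℂ) :
    (d • (1 : PauliOp n)) *ᵥ ψ = d • ψ := by
  rw [Matrix.smul_mulVec, Matrix.one_mulVec]

lemma stab_isStabGroup {n : ℕ} {ψ : (Fin n → Fin 2) → ℂ} (hψ : ψ ≠ 0) :
    IsStabGroup (Stab ψ) := by
  constructor
  · exact fun P hP => hP.1
  · exact ⟨⟨false, 0, by simp [sign, pauliTensor_zero]⟩, Matrix.one_mulVec ψ⟩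
  · rintro P ⟨⟨s, p, rfl⟩, hPfix⟩ Q ⟨⟨t, q, rfl⟩, hQfix⟩
    set d : ℂ := sign s * sign t * ∏ i, phC (p i) (q i) with hd
    set r : Fin n → Fin 4 := fun i => mIdx (p i) (q i) with hr
    have hprod : (sign s • pauliTensor p) * (sign t • pauliTensor q) = d • pauliTensor r := by
      rw [smul_mul_smul_comm, pauliTensor_mul, smul_smul, hd, mul_assoc]
    have hfix : ((sign s • pauliTensor p) * (sign t • pauliTensor q)) *ᵥ ψ = ψ := by
      rw [← Matrix.mulVec_mulVec, hQfix, hPfix]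
    have hd2 : d * d = 1 := by
      have h2 : (d • pauliTensor r) * (d • pauliTensor r) = (d * d) • (1 : PauliOp n) := by
        rw [smul_mul_smul_comm, pauliTensor_sq]
      have h3 : ((d * d) • (1 : PauliOp n)) *ᵥ ψ = ψ := by
        rw [← h2, ← hprod, ← Matrix.mulVec_mulVec, hfix, hfix]
      rw [smul_one_mulVec] at h3
      exact smul_eq_self_of_ne h3 hψ
    refine ⟨?_, hfix⟩
    rcases mul_self_eq_one_iff.1 hd2 with h1 | h1
    · exact ⟨false, r, by rw [hprod, h1]; simp [sign]⟩
    · exact ⟨true, r, by rw [hprod, h1]; simp [sign]⟩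
  · rintro ⟨-, hfix⟩
    rw [Matrix.neg_mulVec, Matrix.one_mulVec] at hfix
    apply hψ
    have := congrArg (fun v => v + ψ) hfix
    simpa [← two_smul ℂ ψ, smul_eq_zero] using this.symm


end StabAux

/-- The map `ψ ↦ Stab ψ` from `n`-qubit stabilizer states to full
stabilizer groups is a bijection: every full stabilizer group stabilizes a state,
unique up to a global phase (equivalently, equal stabilizer groups force
proportional states). -/
theorem stab_correspondence_bijective (n : ℕ) :
    (∀ S : Set (PauliOp n), IsStabGroup S → S.ncard = 2 ^ n →
      ∃ ψ : (Fin n → Fin 2) → ℂ, ψ ≠ 0 ∧ Stab ψ = S) ∧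
    (∀ ψ φ : (Fin n → Fin 2) → ℂ, ψ ≠ 0 → φ ≠ 0 →
      (Stab ψ).ncard = 2 ^ n → (Stab φ).ncard = 2 ^ n →
      Stab ψ = Stab φ → ∃ c : ℂ, φ = c • ψ) := by
  constructor
  · -- existence
    intro S hS hcard
    obtain ⟨Pi, hsq, htr, hmul, hfixgen, horth⟩ := proj_spec S hS hcard
    obtain ⟨ψ, hψ0, hfixψ, hspan⟩ := exists_rank_one Pi hsq htr
    have hforward : ∀ P ∈ S, P *ᵥ ψ = ψ := by
      intro P hP
      calc P *ᵥ ψ = P *ᵥ (Pi *ᵥ ψ) := by rw [hfixψ]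
      _ = (P * Pi) *ᵥ ψ := Matrix.mulVec_mulVec ψ P Pi
      _ = Pi *ᵥ ψ := by rw [hmul P hP]
      _ = ψ := hfixψ
    refine ⟨ψ, hψ0, Set.ext fun Q => ⟨?_, fun hQ => ⟨hS.pauli Q hQ, hforward Q hQ⟩⟩⟩
    rintro ⟨⟨s, q, rfl⟩, hQfix⟩
    by_cases hb : ∃ t, sign t • pauliTensor q ∈ S
    · obtain ⟨t, hP0⟩ := hb
      have hP0fix : (sign t • pauliTensor q) *ᵥ ψ = ψ := hforward _ hP0
      have hprod : (sign s • pauliTensor q) * (sign t • pauliTensor q)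
          = (sign s * sign t) • (1 : PauliOp n) := by
        rw [smul_mul_smul_comm, pauliTensor_sq]
      have hfix2 : ((sign s * sign t) • (1 : PauliOp n)) *ᵥ ψ = ψ := by
        rw [← hprod, ← Matrix.mulVec_mulVec, hP0fix, hQfix]
      rw [smul_one_mulVec] at hfix2
      have hst : sign s * sign t = 1 := smul_eq_self_of_ne hfix2 hψ0
      have : s = t := by
        cases s <;> cases t <;> revert hst <;> norm_num [sign]
      rwa [this]
    · push_neg at hb
      exfalso
      have hQPi : (sign s • pauliTensor q) * Pi = Pi := by
        apply Matrix.toLin'.injective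
        apply LinearMap.ext; intro v
        rw [Matrix.toLin'_apply, Matrix.toLin'_apply, ← Matrix.mulVec_mulVec]
        obtain ⟨cv, hcv⟩ := hspan v
        rw [hcv, Matrix.mulVec_smul, hQfix]
      have h0 : ((sign s • pauliTensor q) * Pi).trace = 0 := horth s q hb
      rw [hQPi, htr] at h0
      exact one_ne_zero h0
  · -- uniqueness
    intro ψ φ hψ0 hφ0 hcψ hcφ heq
    have hSψ : IsStabGroup (Stab ψ) := stab_isStabGroup hψ0
    obtain ⟨Pi, hsq, htr, hmul, hfixgen, horth⟩ := proj_spec (Stab ψ) hSψ hcψ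
    obtain ⟨ψ₀, hψ₀0, hfixψ₀, hspan⟩ := exists_rank_one Pi hsq htr
    have hPiψ : Pi *ᵥ ψ = ψ := hfixgen ψ (fun P hP => hP.2)
    have hPiφ : Pi *ᵥ φ = φ := hfixgen φ (fun P hP => (heq ▸ hP).2)
    obtain ⟨a, ha⟩ := hspan ψ
    obtain ⟨b, hb⟩ := hspan φ
    rw [hPiψ] at ha
    rw [hPiφ] at hb
    have ha0 : a ≠ 0 := by
      rintro rfl
      rw [zero_smul] at ha
      exact hψ0 ha
    refine ⟨b * a⁻¹, ?_⟩
    rw [hb, ha, smul_smul]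
    congr 1
    field_simp
end

section
/- Right-boundary determination lemma: let Q ∈ 𝒮(𝐏) for a k-local Pauli set 𝐏, let Q_{≥m} = Q ∩ ±𝐏_{≥m} and Q_m = Q ∩ ±𝐏_m (grouping by last nontrivial qubit), and define S_right^m = 𝕡_{m-k+1,m}(⟨Q_{≥m}⟩) (the projection of the group generated by Q_{≥m} onto qubits m-k+1 through m). Then S_right^m ∩ ±𝐏_m = Q_m. -/
open Matrix

/-- `SupportedWithin` is closed under negation. -/
lemma neg_mem_supportedWithin {n : ℕ} {s : Set ℕ} {P : PauliOp n}
    (h : P ∈ SupportedWithin (n := n) s) : -P ∈ SupportedWithin (n := n) s := by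
  obtain ⟨sg, p, h1, h2⟩ := h
  refine ⟨!sg, p, h1, ?_⟩
  rw [h2, ← neg_smul]
  congr 1
  cases sg <;> simp [sign]

/-- Right-boundary determination lemma: for a `k`-local Pauli set `Ps`,
`Q ∈ 𝒮(Ps)`, and `S_right^m = 𝕡_{m-k+1,m}(⟨Q_{≥m}⟩)` (projection of the group
generated by the part of `Q` with last qubit `≥ m` onto the window of `k` qubits
ending at `m`), one has `S_right^m ∩ ±Ps_m = Q_m`. -/
theorem right_boundary_determination {n : ℕ} (Ps : Set (PauliOp n)) (k : ℕ)
    (hlocal : ∀ P ∈ Ps, ∀ m : ℕ, P ∈ Layer (n := n) m →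
      P ∈ SupportedWithin (Set.Icc (m + 1 - k) m))
    (Q : Set (PauliOp n)) (hQ : Q ∈ restrictedSubsets Ps) (m : ℕ) :
    (genGroup (Q \ SupportedWithin (Set.Iio m))
        ∩ SupportedWithin (Set.Icc (m + 1 - k) m))
      ∩ (pmSet Ps ∩ Layer (n := n) m)
      = Q ∩ (pmSet Ps ∩ Layer (n := n) m) := by
  obtain ⟨hsub, heq, hneg⟩ := hQ
  ext P
  constructor
  · rintro ⟨⟨hgen, -⟩, hps, hlay⟩
    refine ⟨?_, hps, hlay⟩
    rw [heq]
    refine ⟨?_, hps⟩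
    have : genGroup (Q \ SupportedWithin (Set.Iio m)) ⊆ genGroup Q :=
      Submonoid.closure_mono Set.diff_subset
    exact this hgen
  · rintro ⟨hPQ, hps, hlay⟩
    refine ⟨⟨?_, ?_⟩, hps, hlay⟩
    · exact Submonoid.subset_closure ⟨hPQ, hlay.2⟩
    · rcases hps with hP | hnP
      · exact hlocal P hP m hlay
      · have hnlay : -P ∈ Layer (n := n) m :=
          ⟨neg_mem_supportedWithin hlay.1,
           fun hc => hlay.2 (by simpa using neg_mem_supportedWithin hc)⟩
        have := hlocal (-P) hnP m hnlay
        simpa using neg_mem_supportedWithin this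
end
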